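/- Let Q₀ and Q₁ be probability measures with likelihood ratio L = dQ₁/dQ₀. Then for all t > 0: Q₀(L ≥ t) ≤ (1/t)·Q₁(L ≥ t) − (1/(2t))·Q₁(L ≥ 2t). -/

import Mathlib

/-!
Since `Q₁ ≥ L • Q₀` (the singular part of `Q₁` only adds mass), every set on which `L ≥ c`
satisfies `c · Q₀(s) ≤ Q₁(s)`. Split `{L ≥ t}` into `{t ≤ L < 2t}` and `{L ≥ 2t}` and use
`c = t` on the first piece and `c = 2t` on the second.
-/

open MeasureTheory

namespace MeasureTheory.Measure

variable {α : Type*} [MeasurableSpace α] {μ ν : Measure α} {s : Set α}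

theorem mul_measure_le_of_le_rnDeriv {c : ENNReal} (hs : ∀ x ∈ s, c ≤ μ.rnDeriv ν x) :
    c * ν s ≤ μ s :=
  calc c * ν s = ∫⁻ _ in s, c ∂ν := (setLIntegral_const s c).symm
    _ ≤ ∫⁻ x in s, μ.rnDeriv ν x ∂ν :=
      setLIntegral_mono_ae (measurable_rnDeriv μ ν).aemeasurable (.of_forall hs)
    _ ≤ μ s := setLIntegral_rnDeriv_le s

theorem measureReal_le_inv_mul_of_le_rnDeriv [IsFiniteMeasure μ] {c : ℝ} (hc : 0 < c)
    (hs : ∀ x ∈ s, ENNReal.ofReal c ≤ μ.rnDeriv ν x) :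
    ν.real s ≤ c⁻¹ * μ.real s := by
  have h := ENNReal.toReal_mono (measure_ne_top μ s) (mul_measure_le_of_le_rnDeriv hs)
  rw [ENNReal.toReal_mul, ENNReal.toReal_ofReal hc.le] at h
  rw [inv_mul_eq_div, le_div_iff₀ hc, mul_comm]
  exact h

end MeasureTheory.Measure

theorem stmt_3_general {α : Type*} [MeasurableSpace α] (Q0 Q1 : Measure α)
    [IsProbabilityMeasure Q0] [IsProbabilityMeasure Q1]
    (t : ℝ) (ht : 0 < t) :
    (Q0 {x | ENNReal.ofReal t ≤ Q1.rnDeriv Q0 x}).toReal ≤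
      (1 / t) * (Q1 {x | ENNReal.ofReal t ≤ Q1.rnDeriv Q0 x}).toReal -
        (1 / (2 * t)) * (Q1 {x | ENNReal.ofReal (2 * t) ≤ Q1.rnDeriv Q0 x}).toReal := by
  set A := {x | ENNReal.ofReal t ≤ Q1.rnDeriv Q0 x}
  set B := {x | ENNReal.ofReal (2 * t) ≤ Q1.rnDeriv Q0 x}
  have hB : MeasurableSet B := Measure.measurable_rnDeriv Q1 Q0 measurableSet_Ici
  have hBA : B ⊆ A := fun x hx => (ENNReal.ofReal_le_ofReal (by linarith)).trans hx
  have h_mid : Q0.real (A \ B) ≤ t⁻¹ * Q1.real (A \ B) :=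
    Measure.measureReal_le_inv_mul_of_le_rnDeriv ht fun x hx => hx.1
  have h_top : Q0.real B ≤ (2 * t)⁻¹ * Q1.real B :=
    Measure.measureReal_le_inv_mul_of_le_rnDeriv (by positivity) fun x hx => hx
  rw [measureReal_sdiff hBA hB, measureReal_sdiff hBA hB] at h_mid
  simp only [← measureReal_def, one_div]
  have h_inv : t⁻¹ = 2 * (2 * t)⁻¹ := by field_simp
  rw [h_inv] at h_mid ⊢
  linarith

/-- For mutually absolutely continuous probability measures with likelihood ratio
L = dQ₁/dQ₀: Q₀(L ≥ t) ≤ (1/t)·Q₁(L ≥ t) − (1/(2t))·Q₁(L ≥ 2t) for all t > 0. -/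
theorem stmt_3 {α : Type*} [MeasurableSpace α] (Q0 Q1 : Measure α)
    [IsProbabilityMeasure Q0] [IsProbabilityMeasure Q1]
    (h01 : Q0 ≪ Q1) (h10 : Q1 ≪ Q0) (t : ℝ) (ht : 0 < t) :
    (Q0 {x | ENNReal.ofReal t ≤ Q1.rnDeriv Q0 x}).toReal ≤
      (1 / t) * (Q1 {x | ENNReal.ofReal t ≤ Q1.rnDeriv Q0 x}).toReal -
        (1 / (2 * t)) * (Q1 {x | ENNReal.ofReal (2 * t) ≤ Q1.rnDeriv Q0 x}).toReal :=
  stmt_3_general Q0 Q1 t ht
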